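/- arXiv:2010.05231 — 2 statements merged into one kernel-verified Lean document; each statement's English description precedes it below -/
import Mathlib

section
/- Let g : {1,2,...} → ℚ be a function with g(1) = 1. Then in the ring of formal power series in T over the polynomial ring ℚ[x], one has the identity ∑_{n=0}^∞ P_n^{g,id}(x) T^n = exp( x · ∑_{n=1}^∞ (g(n)/n) T^n ). -/
/-! Both sides solve `y' = y f'`, `y(0) = 1`, in `ℚ[x]⟦T⟧`, where `f = x ∑ (g(n)/n) T^n`, so that
`f' = x ∑ g(n+1) T^n`. For `∑ P_n T^n` this is the defining recursion with `h = id`, read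
coefficientwise. For `exp f` it follows by differentiating the truncations `∑_{k<N} f^k/k!`,
which agree with `exp f` below degree `N` because `f` has no constant term. A solution is
determined by its constant term, since `(n+1) y_{n+1}` is determined by `y_0, …, y_n`. -/

/-- The polynomials `P_n^{g,h}` defined by `P_0 = 1` and
`P_n(x) = (x / h(n)) * ∑_{k=1}^n g(k) P_{n-k}(x)` for `n ≥ 1`. -/
noncomputable def HVP (g h : ℕ → ℚ) : ℕ → Polynomial ℚ
  | 0 => 1
  | (n + 1) =>
      Polynomial.C (h (n + 1))⁻¹ * Polynomial.X *
        ∑ k ∈ (Finset.Icc 1 (n + 1)).attach, Polynomial.C (g k.1) * HVP g h (n + 1 - k.1)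
  decreasing_by
    have := (Finset.mem_Icc.mp k.2).1
    omega

/-- The formal exponential of a power series (intended for series with zero constant
term, for which `f ^ k` contributes to the `n`-th coefficient only when `k ≤ n`):
`exp f = ∑_k f^k / k!`. -/
noncomputable def psExp (f : PowerSeries (Polynomial ℚ)) : PowerSeries (Polynomial ℚ) :=
  PowerSeries.mk fun n =>
    ∑ k ∈ Finset.range (n + 1),
      Polynomial.C ((Nat.factorial k : ℚ))⁻¹ * PowerSeries.coeff n (f ^ k)

open PowerSeries Finset

namespace PowerSeries

variable {R : Type*}

theorem coeff_pow_eq_zero_of_lt [CommSemiring R] {f : R⟦X⟧} (hf : constantCoeff f = 0)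
    {n k : ℕ} (h : n < k) : coeff n (f ^ k) = 0 :=
  coeff_of_lt_order n ((Nat.cast_lt.2 h).trans_le (le_order_pow_of_constantCoeff_eq_zero k hf))

theorem derivative_C_mul [CommSemiring R] (a : R) (f : R⟦X⟧) :
    d⁄dX R (C a * f) = C a * d⁄dX R f := by
  rw [← smul_eq_C_mul, Derivation.map_smul, smul_eq_C_mul]

theorem eq_of_derivative_eq_mul_self [CommRing R] [IsAddTorsionFree R] {A B u : R⟦X⟧}
    (hA : d⁄dX R A = A * u) (hB : d⁄dX R B = B * u) (h0 : constantCoeff A = constantCoeff B) :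
    A = B := by
  ext n
  induction n using Nat.strong_induction_on with
  | _ n ih =>
    cases n with
    | zero => simpa using h0
    | succ n =>
      have hcoeff : coeff n (d⁄dX R A) = coeff n (d⁄dX R B) := by
        rw [hA, hB, coeff_mul, coeff_mul]
        refine sum_congr rfl fun p hp => ?_
        rw [ih p.1 (Nat.antidiagonal.fst_lt hp)]
      rw [coeff_derivative, coeff_derivative, ← Nat.cast_succ, ← nsmul_eq_mul', ← nsmul_eq_mul']
        at hcoeff
      exact IsAddTorsionFree.nsmul_right_injective n.succ_ne_zero hcoeff

variable [CommRing R] [Algebra ℚ R]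

noncomputable def expTrunc (f : R⟦X⟧) (N : ℕ) : R⟦X⟧ :=
  ∑ k ∈ range N, algebraMap ℚ R (k.factorial : ℚ)⁻¹ • f ^ k

theorem derivative_expTrunc_succ (f : R⟦X⟧) (N : ℕ) :
    d⁄dX R (expTrunc f (N + 1)) = expTrunc f N * d⁄dX R f := by
  rw [expTrunc, expTrunc, map_sum, sum_range_succ', sum_mul]
  simp only [Derivation.map_smul, pow_zero, derivative_one, smul_zero, add_zero, derivative_pow,
    Nat.add_sub_cancel]
  refine sum_congr rfl fun k _ => ?_
  rw [mul_assoc, ← nsmul_eq_mul, ← Nat.cast_smul_eq_nsmul R, smul_smul, smul_mul_assoc]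
  congr 1
  rw [← map_natCast (algebraMap ℚ R), ← map_mul, Nat.factorial_succ]
  congr 1
  push_cast
  field_simp

end PowerSeries

theorem coeff_psExp_eq_coeff_expTrunc {f : (Polynomial ℚ)⟦X⟧} (hf : constantCoeff f = 0)
    {n N : ℕ} (h : n < N) : coeff n (psExp f) = coeff n (expTrunc f N) := by
  simp only [psExp, coeff_mk, expTrunc, map_sum, coeff_smul, smul_eq_mul, Polynomial.algebraMap_eq]
  refine sum_subset (range_subset_range.2 h) fun k _ hk => ?_
  rw [coeff_pow_eq_zero_of_lt hf (by simpa using hk), mul_zero]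

theorem constantCoeff_psExp (f : (Polynomial ℚ)⟦X⟧) : constantCoeff (psExp f) = 1 := by
  rw [← coeff_zero_eq_constantCoeff_apply, psExp, coeff_mk]
  simp

theorem derivative_psExp {f : (Polynomial ℚ)⟦X⟧} (hf : constantCoeff f = 0) :
    d⁄dX _ (psExp f) = psExp f * d⁄dX _ f := by
  refine ext fun n => ?_
  calc coeff n (d⁄dX _ (psExp f))
      = coeff n (d⁄dX _ (expTrunc f (n + 2))) := by
        rw [coeff_derivative, coeff_derivative,
          coeff_psExp_eq_coeff_expTrunc hf (Nat.lt_succ_self _)]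
    _ = coeff n (expTrunc f (n + 1) * d⁄dX _ f) := by rw [derivative_expTrunc_succ]
    _ = coeff n (psExp f * d⁄dX _ f) := by
        simp only [coeff_mul]
        refine sum_congr rfl fun p hp => ?_
        rw [coeff_psExp_eq_coeff_expTrunc hf (Nat.antidiagonal.fst_lt hp)]

theorem HVP_succ (g h : ℕ → ℚ) (n : ℕ) :
    HVP g h (n + 1) = Polynomial.C (h (n + 1))⁻¹ * Polynomial.X *
      ∑ p ∈ antidiagonal n, Polynomial.C (g (p.1 + 1)) * HVP g h p.2 := by
  rw [HVP, sum_attach (Icc 1 (n + 1)) fun k => Polynomial.C (g k) * HVP g h (n + 1 - k),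
    ← Ico_add_one_right_eq_Icc, sum_Ico_eq_sum_range,
    Nat.sum_antidiagonal_eq_sum_range_succ fun i j => Polynomial.C (g (i + 1)) * HVP g h j]
  simp only [add_comm 1, Nat.add_sub_cancel, Nat.add_sub_add_right]

theorem derivative_mk_HVP_id (g : ℕ → ℚ) :
    d⁄dX _ (PowerSeries.mk (HVP g fun k => (k : ℚ))) =
      PowerSeries.mk (HVP g fun k => (k : ℚ)) *
        (C Polynomial.X * PowerSeries.mk fun n => Polynomial.C (g (n + 1))) := by
  refine ext fun n => ?_
  rw [coeff_derivative, coeff_mk, HVP_succ, mul_left_comm, coeff_C_mul, coeff_mul,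
    ← Nat.sum_antidiagonal_swap, ← Nat.cast_succ, ← map_natCast Polynomial.C, mul_right_comm,
    mul_right_comm (Polynomial.C _), ← Polynomial.C_mul, inv_mul_cancel₀ (by positivity),
    Polynomial.C_1, one_mul]
  simp only [coeff_mk, Prod.fst_swap, Prod.snd_swap, mul_comm]

theorem derivative_mk_div_natCast (g : ℕ → ℚ) :
    d⁄dX _ (PowerSeries.mk fun n => if n = 0 then 0 else Polynomial.C (g n / n)) =
      PowerSeries.mk fun n => Polynomial.C (g (n + 1)) := by
  refine ext fun n => ?_
  rw [coeff_derivative, coeff_mk, coeff_mk, if_neg n.succ_ne_zero, ← Nat.cast_succ,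
    ← map_natCast Polynomial.C, ← Polynomial.C_mul, div_mul_cancel₀ _ (by positivity)]

theorem exp_generating_series_general (g : ℕ → ℚ) :
    PowerSeries.mk (fun n => HVP g (fun k => (k : ℚ)) n)
      = psExp (PowerSeries.C Polynomial.X *
          PowerSeries.mk fun n => if n = 0 then 0 else Polynomial.C (g n / (n : ℚ))) := by
  set f := PowerSeries.C Polynomial.X *
    PowerSeries.mk fun n => if n = 0 then 0 else Polynomial.C (g n / (n : ℚ))
  have hf : constantCoeff f = 0 := by simp [f]
  have hdf : d⁄dX _ f = C Polynomial.X * PowerSeries.mk fun n => Polynomial.C (g (n + 1)) := by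
    rw [derivative_C_mul, derivative_mk_div_natCast]
  refine eq_of_derivative_eq_mul_self (hdf ▸ derivative_mk_HVP_id g) (derivative_psExp hf) ?_
  rw [constantCoeff_psExp, ← coeff_zero_eq_constantCoeff_apply, coeff_mk, HVP]

/-- `∑_{n≥0} P_n^{g,id}(x) T^n = exp (x · ∑_{n≥1} (g(n)/n) T^n)` in `ℚ[x][[T]]`. -/
theorem exp_generating_series (g : ℕ → ℚ) (hg1 : g 1 = 1) :
    PowerSeries.mk (fun n => HVP g (fun k => (k : ℚ)) n)
      = psExp (PowerSeries.C Polynomial.X *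
          PowerSeries.mk fun n => if n = 0 then 0 else Polynomial.C (g n / (n : ℚ))) :=
  exp_generating_series_general g
end

section
/- Let g : {1,2,...} → ℚ be a function with g(1) = 1, and let E_g(T) = ∑_{n=1}^∞ (g(n)/n) T^n as a formal power series over ℚ. Then for every m ≥ 1: E_g(T)^m = m! · ∑_{n=m}^∞ A_{n,m}^{g,id} T^n, and also E_g(T)^m = ∑_{n=m}^∞ A_{n,m}^{g̃,1} T^n. -/
open PowerSeries

theorem Finset.sum_Icc_one_eq_sum_range {M : Type*} [AddCommMonoid M] (f : ℕ → M) (n : ℕ) :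
    ∑ k ∈ Finset.Icc 1 n, f k = ∑ i ∈ Finset.range n, f (i + 1) := by
  rw [Finset.range_eq_Ico, Finset.sum_Ico_add', zero_add, Finset.Ico_add_one_right_eq_Icc]

theorem PowerSeries.mk_ite_zero_eq_X_mul {R : Type*} [Semiring R] (f : ℕ → R) :
    (PowerSeries.mk fun n => if n = 0 then 0 else f n)
      = X * PowerSeries.mk fun n => f (n + 1) := by
  ext (_ | n) <;> simp [coeff_succ_X_mul]

theorem PowerSeries.derivative_mk_ite_zero_div {K : Type*} [Field K] [CharZero K] (f : ℕ → K) :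
    d⁄dX K (PowerSeries.mk fun n => if n = 0 then 0 else f n / n)
      = PowerSeries.mk fun n => f (n + 1) := by
  ext n
  rw [coeff_derivative, coeff_mk, coeff_mk, if_neg n.succ_ne_zero]
  push_cast
  field_simp

theorem HVP_zero (g h : ℕ → ℚ) : HVP g h 0 = 1 := by
  rw [HVP]

theorem HVP_succ_eq_sum_range (g h : ℕ → ℚ) (n : ℕ) :
    HVP g h (n + 1) = Polynomial.C (h (n + 1))⁻¹ * Polynomial.X *
      ∑ i ∈ Finset.range (n + 1), Polynomial.C (g (i + 1)) * HVP g h (n - i) := by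
  rw [HVP, Finset.sum_attach (Finset.Icc 1 (n + 1))
    fun k => Polynomial.C (g k) * HVP g h (n + 1 - k), Finset.sum_Icc_one_eq_sum_range]
  simp

namespace HVP

variable (g h : ℕ → ℚ)

noncomputable def coeffSeries (m : ℕ) : PowerSeries ℚ :=
  PowerSeries.mk fun n => (HVP g h n).coeff m

theorem coeffSeries_zero : coeffSeries g h 0 = 1 := by
  ext (_ | n) <;> simp [coeffSeries, HVP_zero, HVP_succ_eq_sum_range, coeff_one]

theorem constantCoeff_coeffSeries_succ (m : ℕ) :
    constantCoeff (coeffSeries g h (m + 1)) = 0 := by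
  simp [coeffSeries, ← coeff_zero_eq_constantCoeff_apply, HVP_zero, Polynomial.coeff_one]

theorem coeff_succ_succ (n m : ℕ) :
    (HVP g h (n + 1)).coeff (m + 1)
      = (h (n + 1))⁻¹ * coeff n ((PowerSeries.mk fun k => g (k + 1)) * coeffSeries g h m) := by
  rw [HVP_succ_eq_sum_range, mul_assoc, Polynomial.coeff_C_mul, Polynomial.coeff_X_mul,
    Polynomial.finsetSum_coeff, coeff_mul, Finset.Nat.sum_antidiagonal_eq_sum_range_succ_mk]
  simp [Polynomial.coeff_C_mul, coeffSeries]

theorem coeffSeries_const_one_succ (m : ℕ) :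
    coeffSeries g (fun _ => 1) (m + 1)
      = X * ((PowerSeries.mk fun k => g (k + 1)) * coeffSeries g (fun _ => 1) m) := by
  ext (_ | n)
  · simp [coeff_zero_eq_constantCoeff_apply, constantCoeff_coeffSeries_succ]
  · rw [coeff_succ_X_mul, coeffSeries, coeff_mk, coeff_succ_succ, inv_one, one_mul]

theorem pow_eq_coeffSeries_const_one (m : ℕ) :
    (PowerSeries.mk fun n => if n = 0 then 0 else g n) ^ m = coeffSeries g (fun _ => 1) m := by
  induction m with
  | zero => rw [pow_zero, coeffSeries_zero]
  | succ m ih => rw [pow_succ', ih, coeffSeries_const_one_succ, mk_ite_zero_eq_X_mul, mul_assoc]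

theorem derivative_coeffSeries_id_succ (m : ℕ) :
    d⁄dX ℚ (coeffSeries g (fun k => (k : ℚ)) (m + 1))
      = (PowerSeries.mk fun k => g (k + 1)) * coeffSeries g (fun k => (k : ℚ)) m := by
  ext n
  rw [coeff_derivative, coeffSeries, coeff_mk, coeff_succ_succ]
  push_cast
  field_simp

theorem pow_eq_factorial_smul_coeffSeries_id (m : ℕ) :
    (PowerSeries.mk fun n => if n = 0 then 0 else g n / n) ^ m
      = (m.factorial : ℚ) • coeffSeries g (fun k => (k : ℚ)) m := by
  induction m with
  | zero => rw [pow_zero, coeffSeries_zero, Nat.factorial_zero, Nat.cast_one, one_smul]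
  | succ m ih =>
    refine derivative.ext ?_ ?_
    · rw [derivative_pow, Nat.add_sub_cancel, ih, derivative_mk_ite_zero_div, Derivation.map_smul,
        derivative_coeffSeries_id_succ, Nat.factorial_succ]
      simp only [Algebra.smul_def, Nat.cast_mul, map_mul, map_natCast]
      ring
    · simp [constantCoeff_coeffSeries_succ]

end HVP

theorem eichler_power_coefficients_general (g : ℕ → ℚ) (m : ℕ) :
    (PowerSeries.mk fun n => if n = 0 then 0 else g n / (n : ℚ)) ^ m
        = PowerSeries.mk (fun n =>
            (Nat.factorial m : ℚ) * (HVP g (fun k => (k : ℚ)) n).coeff m) ∧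
    (PowerSeries.mk fun n => if n = 0 then 0 else g n / (n : ℚ)) ^ m
        = PowerSeries.mk (fun n =>
            (HVP (fun k => g k / (k : ℚ)) (fun _ => 1) n).coeff m) := by
  refine ⟨?_, HVP.pow_eq_coeffSeries_const_one _ m⟩
  rw [HVP.pow_eq_factorial_smul_coeffSeries_id]
  ext n
  simp [HVP.coeffSeries]

/-- For `m ≥ 1`, with `E_g(T) = ∑_{n≥1} (g(n)/n) T^n`:
`E_g(T)^m = m! · ∑_{n≥m} A_{n,m}^{g,id} T^n` and `E_g(T)^m = ∑_{n≥m} A_{n,m}^{g̃,1} T^n`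
(the coefficients `A_{n,m}` vanish for `n < m`). -/
theorem eichler_power_coefficients (g : ℕ → ℚ) (hg1 : g 1 = 1) (m : ℕ) (hm : 1 ≤ m) :
    (PowerSeries.mk fun n => if n = 0 then 0 else g n / (n : ℚ)) ^ m
        = PowerSeries.mk (fun n =>
            (Nat.factorial m : ℚ) * (HVP g (fun k => (k : ℚ)) n).coeff m) ∧
    (PowerSeries.mk fun n => if n = 0 then 0 else g n / (n : ℚ)) ^ m
        = PowerSeries.mk (fun n =>
            (HVP (fun k => g k / (k : ℚ)) (fun _ => 1) n).coeff m) :=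
  eichler_power_coefficients_general g m
end
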